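/- Let k ≥ 2 and let M be the k×k matrix defined below. Then for every x ∈ ℝ^k with ∑_{i=1}^k x_i = 0, one has xᵀ M x ≤ −‖x‖², where ‖x‖² = ∑_{i=1}^k x_i² is the squared Euclidean norm. -/
import Mathlib


open Matrix

/-- `σᵢ = i(k-i)/2` (so that `σ₀ = σ_k = 0`). -/
noncomputable def sig (k i : ℕ) : ℝ := (i : ℝ) * ((k : ℝ) - (i : ℝ)) / 2

/-- The `k×k` symmetric tridiagonal matrix `M`, indexed by `Fin k` (0-based): in 1-based
notation, `M_{i,i} = -(σ_{i-1} + σ_i)` and `M_{i,i+1} = M_{i+1,i} = σ_i`. -/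
noncomputable def Mmat (k : ℕ) : Matrix (Fin k) (Fin k) ℝ :=
  Matrix.of fun a b =>
    if a = b then -(sig k (a : ℕ) + sig k ((a : ℕ) + 1))
    else if (a : ℕ) + 1 = (b : ℕ) then sig k ((a : ℕ) + 1)
    else if (b : ℕ) + 1 = (a : ℕ) then sig k ((b : ℕ) + 1)
    else 0

open Finset

/-- ℕ-indexed version of the matrix entries. -/
noncomputable def mfun (k : ℕ) : ℕ → ℕ → ℝ := fun a b =>
  if a = b then -(sig k a + sig k (a + 1))
  else if a + 1 = b then sig k (a + 1)
  else if b + 1 = a then sig k (b + 1)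
  else 0

lemma sig_zero (k : ℕ) : sig k 0 = 0 := by simp [sig]

lemma sig_self (k : ℕ) : sig k k = 0 := by simp [sig]

lemma mfun_eq (k : ℕ) (a b : Fin k) : Mmat k a b = mfun k a b := by
  simp only [Mmat, Matrix.of_apply, mfun, Fin.ext_iff]

lemma gaussR (n : ℕ) : ∑ i ∈ range n, (i : ℝ) = n * (n - 1) / 2 := by
  induction n with
  | zero => simp
  | succ n ih => rw [Finset.sum_range_succ, ih]; push_cast; ring

lemma innerSumAux (k : ℕ) (y : ℕ → ℝ) (hy0 : ∀ j, k ≤ j → y j = 0) (a : ℕ) (ha : a < k) :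
    ∑ b ∈ range k, mfun k a b * y b
      = -(sig k a + sig k (a + 1)) * y a + sig k (a + 1) * y (a + 1)
        + sig k a * y (a - 1) := by
  have key : ∀ b, mfun k a b * y b
      = (if b = a then -(sig k a + sig k (a + 1)) * y a else 0)
        + (if b = a + 1 then sig k (a + 1) * y (a + 1) else 0)
        + (if b = a - 1 then sig k a * y (a - 1) else 0) := by
    intro b
    rcases Nat.eq_zero_or_pos a with rfl | hapos
    · by_cases h1 : b = 0
      · subst h1; simp [mfun, sig_zero]
      · by_cases h2 : b = 1
        · subst h2; simp [mfun, h1, sig_zero]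
        · have h3 : ¬ (0 + 1 = b) := by omega
          have h4 : ¬ (b + 1 = 0) := by omega
          have h5 : ¬ (0 = b) := by omega
          simp [mfun, h1, h2, h3, h4, h5]
    · by_cases h1 : b = a
      · subst h1
        have h2 : ¬ (b = b + 1) := by omega
        have h3 : ¬ (b = b - 1) := by omega
        simp [mfun, h2, h3]
      · by_cases h2 : b = a + 1
        · subst h2
          have h3 : ¬ (a + 1 = a - 1) := by omega
          have h4 : ¬ (a + 1 + 1 = a) := by omega
          simp [mfun, h1, h3, h4]
        · by_cases h3 : b + 1 = a
          · have hb : b = a - 1 := by omega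
            subst hb
            simp only [mfun]
            rw [if_neg (show ¬ a = a - 1 by omega), if_neg (show ¬ a + 1 = a - 1 by omega),
              if_pos (show a - 1 + 1 = a by omega),
              if_neg (show ¬ (a - 1 : ℕ) = a by omega),
              if_neg (show ¬ (a - 1 : ℕ) = a + 1 by omega),
              show a - 1 + 1 = a by omega]
            simp
          · have h4 : ¬ (b = a - 1) := by omega
            have h5 : ¬ (a = b) := by omega
            have h6 : ¬ (a + 1 = b) := by omega
            simp [mfun, h1, h2, h3, h4, h5, h6]
  calc ∑ b ∈ range k, mfun k a b * y b
      = ∑ b ∈ range k, ((if b = a then -(sig k a + sig k (a + 1)) * y a else 0)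
        + (if b = a + 1 then sig k (a + 1) * y (a + 1) else 0)
        + (if b = a - 1 then sig k a * y (a - 1) else 0)) :=
        Finset.sum_congr rfl fun b _ => key b
    _ = _ := by
        rw [Finset.sum_add_distrib, Finset.sum_add_distrib,
          Finset.sum_ite_eq' (range k) a, Finset.sum_ite_eq' (range k) (a + 1),
          Finset.sum_ite_eq' (range k) (a - 1)]
        have hmem1 : a ∈ range k := Finset.mem_range.2 ha
        have hmem3 : a - 1 ∈ range k := Finset.mem_range.2 (by omega)
        rw [if_pos hmem1, if_pos hmem3]
        congr 1
        congr 1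
        split_ifs with h
        · rfl
        · have : y (a + 1) = 0 := hy0 _ (by simp [Finset.mem_range] at h; omega)
          rw [this, mul_zero]

lemma quadform (k : ℕ) (x : Fin k → ℝ) (y : ℕ → ℝ)
    (hyx : ∀ a : Fin k, y (a : ℕ) = x a) (hy0 : ∀ j, k ≤ j → y j = 0) :
    x ⬝ᵥ (Mmat k).mulVec x
      = -∑ a ∈ range k, sig k (a + 1) * (y (a + 1) - y a) ^ 2 := by
  have hmv : ∀ a : Fin k, (Mmat k).mulVec x a = ∑ b ∈ range k, mfun k (a : ℕ) b * y b := by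
    intro a
    rw [Matrix.mulVec, dotProduct]
    rw [← Fin.sum_univ_eq_sum_range (fun b => mfun k (a : ℕ) b * y b) k]
    exact Finset.sum_congr rfl fun b _ => by rw [mfun_eq, hyx]
  have hS : x ⬝ᵥ (Mmat k).mulVec x
      = ∑ a ∈ range k, y a * (∑ b ∈ range k, mfun k a b * y b) := by
    rw [dotProduct]
    rw [← Fin.sum_univ_eq_sum_range (fun a => y a * (∑ b ∈ range k, mfun k a b * y b)) k]
    exact Finset.sum_congr rfl fun a _ => by rw [hmv, hyx]
  rw [hS]
  set h : ℕ → ℝ := fun a => sig k a * y a * (y a - y (a - 1)) with hh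
  have step : ∀ a ∈ range k,
      y a * (∑ b ∈ range k, mfun k a b * y b)
        = -(sig k (a + 1) * (y (a + 1) - y a) ^ 2) + (h (a + 1) - h a) := by
    intro a ha
    rw [innerSumAux k y hy0 a (Finset.mem_range.1 ha)]
    rcases a with _ | a'
    · simp only [hh, Nat.zero_sub, Nat.add_sub_cancel, sig_zero]
      ring
    · simp only [hh, Nat.add_sub_cancel]
      ring
  rw [Finset.sum_congr rfl step, Finset.sum_add_distrib, Finset.sum_range_sub h k]
  have h0 : h 0 = 0 := by simp [hh, sig_zero]
  have hkk : h k = 0 := by simp [hh, sig_self]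
  rw [h0, hkk, Finset.sum_neg_distrib]
  ring

lemma identA (y : ℕ → ℝ) (n : ℕ) :
    ∑ j ∈ range n, ∑ i ∈ range j, (y j - y i) ^ 2
      = n * ∑ i ∈ range n, (y i) ^ 2 - (∑ i ∈ range n, y i) ^ 2 := by
  induction n with
  | zero => simp
  | succ n ih =>
    rw [Finset.sum_range_succ, ih, Finset.sum_range_succ (f := fun i => (y i) ^ 2),
      Finset.sum_range_succ (f := fun i => y i)]
    have h1 : ∑ i ∈ range n, (y n - y i) ^ 2
        = n * (y n) ^ 2 + ∑ i ∈ range n, (y i) ^ 2 - 2 * y n * ∑ i ∈ range n, y i := by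
      have : ∀ i ∈ range n, (y n - y i) ^ 2
          = (y n) ^ 2 + ((y i) ^ 2 - 2 * y n * y i) := by intro i _; ring
      rw [Finset.sum_congr rfl this, Finset.sum_add_distrib, Finset.sum_sub_distrib,
        Finset.sum_const, ← Finset.mul_sum]
      simp [nsmul_eq_mul]
      ring
    rw [h1]
    push_cast
    ring

lemma csB (y : ℕ → ℝ) (i j : ℕ) (hij : i ≤ j) :
    (y j - y i) ^ 2 ≤ ((j : ℝ) - i) * ∑ l ∈ Ico i j, (y (l + 1) - y l) ^ 2 := by
  have ht : y j - y i = ∑ l ∈ Ico i j, (y (l + 1) - y l) := by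
    rw [Finset.sum_Ico_eq_sub _ hij, Finset.sum_range_sub, Finset.sum_range_sub]
    ring
  rw [ht]
  have := sq_sum_le_card_mul_sum_sq (s := Ico i j) (f := fun l => y (l + 1) - y l)
  calc (∑ l ∈ Ico i j, (y (l + 1) - y l)) ^ 2
      ≤ ((Ico i j).card : ℝ) * ∑ l ∈ Ico i j, (y (l + 1) - y l) ^ 2 := by
        exact_mod_cast this
    _ = ((j : ℝ) - i) * ∑ l ∈ Ico i j, (y (l + 1) - y l) ^ 2 := by
        rw [Nat.card_Ico, Nat.cast_sub hij]

lemma Wval (k l : ℕ) (hl : l < k - 1) :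
    ∑ j ∈ range k, ∑ i ∈ range k, (if i ≤ l ∧ l < j then ((j : ℝ) - i) else 0)
      = (k : ℝ) * sig k (l + 1) := by
  have hl1 : l + 1 ≤ k := by omega
  have hinner : ∀ j ∈ range k,
      ∑ i ∈ range k, (if i ≤ l ∧ l < j then ((j : ℝ) - i) else 0)
        = if l < j then ((l : ℝ) + 1) * j - ((l : ℝ) + 1) * l / 2 else 0 := by
    intro j _
    by_cases hj : l < j
    · rw [if_pos hj]
      have h1 : ∑ i ∈ range k, (if i ≤ l ∧ l < j then ((j : ℝ) - i) else 0)
          = ∑ i ∈ range (l + 1), ((j : ℝ) - i) := by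
        rw [← Finset.sum_filter]
        apply Finset.sum_congr
        · ext i; simp only [Finset.mem_filter, Finset.mem_range]; omega
        · intros; rfl
      rw [h1, Finset.sum_sub_distrib, Finset.sum_const, gaussR]
      simp only [Finset.card_range, nsmul_eq_mul]
      push_cast
      ring
    · rw [if_neg hj]
      apply Finset.sum_eq_zero
      intro i _
      rw [if_neg (by omega)]
  rw [Finset.sum_congr rfl hinner]
  have h2 : ∑ j ∈ range k, (if l < j then ((l : ℝ) + 1) * j - ((l : ℝ) + 1) * l / 2 else 0)
      = ∑ j ∈ Ico (l + 1) k, (((l : ℝ) + 1) * j - ((l : ℝ) + 1) * l / 2) := by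
    rw [← Finset.sum_filter]
    apply Finset.sum_congr
    · ext j; simp only [Finset.mem_filter, Finset.mem_range, Finset.mem_Ico]; omega
    · intros; rfl
  rw [h2, Finset.sum_Ico_eq_sub _ hl1]
  have expand : ∀ n : ℕ, ∑ j ∈ range n, (((l : ℝ) + 1) * j - ((l : ℝ) + 1) * l / 2)
      = ((l : ℝ) + 1) * (n * (n - 1) / 2) - n * (((l : ℝ) + 1) * l / 2) := by
    intro n
    rw [Finset.sum_sub_distrib, ← Finset.mul_sum, gaussR, Finset.sum_const]
    simp [nsmul_eq_mul]
  rw [expand, expand, sig]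
  have hcast : ((l : ℝ) + 1) = ((l + 1 : ℕ) : ℝ) := by push_cast; ring
  push_cast
  ring

lemma keyC (k : ℕ) (d : ℕ → ℝ) :
    ∑ j ∈ range k, ∑ i ∈ range j, (((j : ℝ) - i) * ∑ l ∈ Ico i j, d l ^ 2)
      = ∑ l ∈ range (k - 1), ((k : ℝ) * sig k (l + 1)) * d l ^ 2 := by
  have step1 : ∀ j ∈ range k,
      ∑ i ∈ range j, (((j : ℝ) - i) * ∑ l ∈ Ico i j, d l ^ 2)
        = ∑ i ∈ range k, ∑ l ∈ range (k - 1),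
            (if i ≤ l ∧ l < j then ((j : ℝ) - i) * d l ^ 2 else 0) := by
    intro j hj
    have hjk : j < k := Finset.mem_range.1 hj
    have inner : ∀ i ∈ range j, ((j : ℝ) - i) * ∑ l ∈ Ico i j, d l ^ 2
        = ∑ l ∈ range (k - 1), (if i ≤ l ∧ l < j then ((j : ℝ) - i) * d l ^ 2 else 0) := by
      intro i hi
      have h1 : ∑ l ∈ Ico i j, d l ^ 2
          = ∑ l ∈ range (k - 1), (if i ≤ l ∧ l < j then d l ^ 2 else 0) := by
        rw [← Finset.sum_filter]
        apply Finset.sum_congr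
        · ext l; simp only [Finset.mem_filter, Finset.mem_range, Finset.mem_Ico]; omega
        · intros; rfl
      rw [h1, Finset.mul_sum]
      apply Finset.sum_congr rfl
      intro l _
      split_ifs with h
      · rfl
      · rw [mul_zero]
    rw [Finset.sum_congr rfl inner]
    apply Finset.sum_subset (Finset.range_subset_range.2 hjk.le)
    intro i _ hi
    apply Finset.sum_eq_zero
    intro l _
    rw [if_neg (by simp only [Finset.mem_range] at hi; omega)]
  rw [Finset.sum_congr rfl step1]
  have swapIL : ∀ j ∈ range k,
      ∑ i ∈ range k, ∑ l ∈ range (k - 1),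
          (if i ≤ l ∧ l < j then ((j : ℝ) - i) * d l ^ 2 else 0)
        = ∑ l ∈ range (k - 1), ∑ i ∈ range k,
          (if i ≤ l ∧ l < j then ((j : ℝ) - i) * d l ^ 2 else 0) := by
    intro j _
    exact Finset.sum_comm
  rw [Finset.sum_congr rfl swapIL, Finset.sum_comm]
  apply Finset.sum_congr rfl
  intro l hl
  have hlk : l < k - 1 := Finset.mem_range.1 hl
  have factor : ∀ j ∈ range k, ∀ i, (if i ≤ l ∧ l < j then ((j : ℝ) - i) * d l ^ 2 else 0)
      = (if i ≤ l ∧ l < j then ((j : ℝ) - i) else 0) * d l ^ 2 := by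
    intro j _ i
    split_ifs
    · rfl
    · rw [zero_mul]
  calc ∑ j ∈ range k, ∑ i ∈ range k,
        (if i ≤ l ∧ l < j then ((j : ℝ) - i) * d l ^ 2 else 0)
      = ∑ j ∈ range k, (∑ i ∈ range k,
          (if i ≤ l ∧ l < j then ((j : ℝ) - i) else 0)) * d l ^ 2 := by
        apply Finset.sum_congr rfl
        intro j hj
        rw [Finset.sum_mul]
        exact Finset.sum_congr rfl fun i _ => factor j hj i
    _ = (∑ j ∈ range k, ∑ i ∈ range k,
          (if i ≤ l ∧ l < j then ((j : ℝ) - i) else 0)) * d l ^ 2 := by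
        rw [Finset.sum_mul]
    _ = ((k : ℝ) * sig k (l + 1)) * d l ^ 2 := by rw [Wval k l hlk]

lemma poincare (k : ℕ) (hk : 1 ≤ k) (y : ℕ → ℝ) (hsum : ∑ i ∈ range k, y i = 0) :
    ∑ i ∈ range k, (y i) ^ 2
      ≤ ∑ l ∈ range (k - 1), sig k (l + 1) * (y (l + 1) - y l) ^ 2 := by
  have hkpos : (0 : ℝ) < k := by exact_mod_cast hk
  have hA : (k : ℝ) * ∑ i ∈ range k, (y i) ^ 2
      = ∑ j ∈ range k, ∑ i ∈ range j, (y j - y i) ^ 2 := by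
    rw [identA, hsum]; ring
  have hB : ∑ j ∈ range k, ∑ i ∈ range j, (y j - y i) ^ 2
      ≤ ∑ j ∈ range k, ∑ i ∈ range j,
          (((j : ℝ) - i) * ∑ l ∈ Ico i j, (y (l + 1) - y l) ^ 2) := by
    apply Finset.sum_le_sum
    intro j _
    apply Finset.sum_le_sum
    intro i hi
    exact csB y i j (Nat.le_of_lt (Finset.mem_range.1 hi))
  have hC := keyC k (fun l => y (l + 1) - y l)
  have hD : (k : ℝ) * ∑ i ∈ range k, (y i) ^ 2
      ≤ (k : ℝ) * ∑ l ∈ range (k - 1), sig k (l + 1) * (y (l + 1) - y l) ^ 2 := by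
    rw [hA, Finset.mul_sum]
    calc ∑ j ∈ range k, ∑ i ∈ range j, (y j - y i) ^ 2
        ≤ ∑ j ∈ range k, ∑ i ∈ range j,
            (((j : ℝ) - i) * ∑ l ∈ Ico i j, (y (l + 1) - y l) ^ 2) := hB
      _ = ∑ l ∈ range (k - 1), ((k : ℝ) * sig k (l + 1)) * (y (l + 1) - y l) ^ 2 := hC
      _ = ∑ l ∈ range (k - 1), (k : ℝ) * (sig k (l + 1) * (y (l + 1) - y l) ^ 2) := by
          apply Finset.sum_congr rfl; intros; ring
  exact le_of_mul_le_mul_left hD hkpos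

/-- for every `x ∈ ℝ^k` with `∑ᵢ xᵢ = 0`, one has `xᵀ M x ≤ -‖x‖²`,
where `‖x‖² = ∑ᵢ xᵢ²`. -/
theorem stmt12 (k : ℕ) (hk : 2 ≤ k) (x : Fin k → ℝ) (hx : ∑ i, x i = 0) :
    x ⬝ᵥ (Mmat k).mulVec x ≤ -∑ i, (x i) ^ 2 := by
  obtain ⟨k', rfl⟩ : ∃ k', k = k' + 1 := ⟨k - 1, by omega⟩
  set y : ℕ → ℝ := fun i => if h : i < k' + 1 then x ⟨i, h⟩ else 0 with hy
  have hyx : ∀ a : Fin (k' + 1), y (a : ℕ) = x a := by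
    intro a
    simp only [hy]
    rw [dif_pos a.isLt]
  have hy0 : ∀ j, k' + 1 ≤ j → y j = 0 := by
    intro j hj
    simp only [hy]
    rw [dif_neg (by omega)]
  have hxsq : ∑ i, (x i) ^ 2 = ∑ i ∈ range (k' + 1), (y i) ^ 2 := by
    rw [← Fin.sum_univ_eq_sum_range (fun i => (y i) ^ 2) (k' + 1)]
    exact Finset.sum_congr rfl fun a _ => by rw [hyx]
  have hxsum : ∑ i ∈ range (k' + 1), y i = 0 := by
    rw [← Fin.sum_univ_eq_sum_range (fun i => y i) (k' + 1), ← hx]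
    exact Finset.sum_congr rfl fun a _ => hyx a
  have hQ := quadform (k' + 1) x y hyx hy0
  have hP := poincare (k' + 1) (by omega) y hxsum
  have hk1 : k' + 1 - 1 = k' := by omega
  rw [hk1] at hP
  have hsplit : ∑ a ∈ range (k' + 1), sig (k' + 1) (a + 1) * (y (a + 1) - y a) ^ 2
      = ∑ a ∈ range k', sig (k' + 1) (a + 1) * (y (a + 1) - y a) ^ 2 := by
    rw [Finset.sum_range_succ, sig_self]
    ring
  rw [hQ, hxsq, hsplit]
  linarith
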